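/- Let n ≥ 1 and let E, F ⊂ ℝⁿ be disjoint measurable sets with L_{s₀}(E,F) < ∞ for some s₀ ∈ (0,1/2). If min{𝓛ⁿ(E), 𝓛ⁿ(F)} < ∞, then lim_{s→0⁺} s · | L_s(E,F) − ∫_E ∫_F ∫₁^∞ p_t(x,y) t^{-(1+s)} dt dy dx | = 0. -/

import Mathlib

/-!
Splitting the time integral at `t = 1` and swapping integrals (Tonelli) gives
`L_s(E,F) = ∫₀¹ t^{-(1+s)} H(t) dt + M_s(E,F)` with `H(t) = ∫_E ∫_F p_t` (`heatTransfer`). Hence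
`|L_s − M_s|` is the small-time part, which for `t ≤ 1` is monotone in `s`, so it is bounded by
`L_{s₀}(E,F) < ∞` for `s ≤ s₀`; multiplying by `s → 0⁺` gives the limit.
-/

open MeasureTheory Real Filter Topology Set
open scoped ENNReal

/-- The classical heat kernel on `ℝⁿ`. -/
noncomputable def heatKernel (n : ℕ) (t : ℝ) (x y : EuclideanSpace ℝ (Fin n)) : ℝ :=
  (4 * π * t) ^ (-(n : ℝ) / 2) * Real.exp (-‖x - y‖ ^ 2 / (4 * t))

/-- `L_s(A,B) = ∫₀^∞ t^{-(1+s)} ∫_A ∫_B p_t(x,y) dy dx dt`. -/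
noncomputable def Lfun (n : ℕ) (s : ℝ) (A B : Set (EuclideanSpace ℝ (Fin n))) : ℝ≥0∞ :=
  ∫⁻ t in Set.Ioi (0:ℝ), ENNReal.ofReal (t ^ (-(1 + s))) *
    ∫⁻ x in A, ∫⁻ y in B, ENNReal.ofReal (heatKernel n t x y)

/-- `M_s(E,F) = ∫_E ∫_F ∫₁^∞ p_t(x,y) t^{-(1+s)} dt dy dx`. -/
noncomputable def Mfun (n : ℕ) (s : ℝ) (E F : Set (EuclideanSpace ℝ (Fin n))) : ℝ≥0∞ :=
  ∫⁻ x in E, ∫⁻ y in F, ∫⁻ t in Set.Ioi (1:ℝ),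
    ENNReal.ofReal (heatKernel n t x y * t ^ (-(1 + s)))

theorem MeasureTheory.lintegral_lintegral_lintegral_swap {α β γ : Type*} [MeasurableSpace α]
    [MeasurableSpace β] [MeasurableSpace γ] {μ : Measure α} {ν : Measure β} {ρ : Measure γ}
    [SFinite μ] [SFinite ν] [SFinite ρ] {f : γ → α → β → ℝ≥0∞}
    (hf : Measurable fun p : γ × α × β => f p.1 p.2.1 p.2.2) :
    ∫⁻ x, ∫⁻ y, ∫⁻ t, f t x y ∂ρ ∂ν ∂μ = ∫⁻ t, ∫⁻ x, ∫⁻ y, f t x y ∂ν ∂μ ∂ρ := by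
  have hinner : Measurable fun p : α × γ => ∫⁻ y, f p.2 p.1 y ∂ν :=
    (hf.comp (f := fun q : (α × γ) × β => (q.1.2, q.1.1, q.2)) (by fun_prop)).lintegral_prod_right'
  calc ∫⁻ x, ∫⁻ y, ∫⁻ t, f t x y ∂ρ ∂ν ∂μ = ∫⁻ x, ∫⁻ t, ∫⁻ y, f t x y ∂ν ∂ρ ∂μ := by
        refine lintegral_congr fun x => lintegral_lintegral_swap ?_
        exact (hf.comp (f := fun q : β × γ => (q.2, x, q.1)) (by fun_prop)).aemeasurable
    _ = ∫⁻ t, ∫⁻ x, ∫⁻ y, f t x y ∂ν ∂μ ∂ρ := lintegral_lintegral_swap hinner.aemeasurable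

section HeatKernel

variable (n : ℕ)

theorem heatKernel_nonneg {t : ℝ} (ht : 0 < t) (x y : EuclideanSpace ℝ (Fin n)) :
    0 ≤ heatKernel n t x y :=
  mul_nonneg (Real.rpow_nonneg (by positivity) _) (Real.exp_nonneg _)

theorem measurable_heatKernel :
    Measurable fun p : ℝ × EuclideanSpace ℝ (Fin n) × EuclideanSpace ℝ (Fin n) =>
      heatKernel n p.1 p.2.1 p.2.2 := by
  unfold heatKernel
  fun_prop

noncomputable def heatTransfer (E F : Set (EuclideanSpace ℝ (Fin n))) (t : ℝ) : ℝ≥0∞ :=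
  ∫⁻ x in E, ∫⁻ y in F, ENNReal.ofReal (heatKernel n t x y)

variable (s : ℝ) (E F : Set (EuclideanSpace ℝ (Fin n)))

theorem Lfun_eq_add :
    Lfun n s E F =
      (∫⁻ t in Ioc 0 1, ENNReal.ofReal (t ^ (-(1 + s))) * heatTransfer n E F t) +
        ∫⁻ t in Ioi 1, ENNReal.ofReal (t ^ (-(1 + s))) * heatTransfer n E F t := by
  rw [Lfun, ← Ioc_union_Ioi_eq_Ioi zero_le_one,
    lintegral_union measurableSet_Ioi (Ioc_disjoint_Ioi le_rfl)]
  rfl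

theorem Mfun_eq :
    Mfun n s E F = ∫⁻ t in Ioi 1, ENNReal.ofReal (t ^ (-(1 + s))) * heatTransfer n E F t := by
  have hsplit : Mfun n s E F = ∫⁻ x in E, ∫⁻ y in F, ∫⁻ t in Ioi 1,
      ENNReal.ofReal (heatKernel n t x y) * ENNReal.ofReal (t ^ (-(1 + s))) := by
    refine lintegral_congr fun x => lintegral_congr fun y => ?_
    refine setLIntegral_congr_fun measurableSet_Ioi fun t ht => ?_
    exact ENNReal.ofReal_mul (heatKernel_nonneg n (zero_lt_one.trans ht) x y)
  rw [hsplit, lintegral_lintegral_lintegral_swap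
    ((measurable_heatKernel n).ennreal_ofReal.mul (by fun_prop))]
  refine lintegral_congr fun t => ?_
  simp_rw [lintegral_mul_const' _ _ ENNReal.ofReal_ne_top]
  exact mul_comm _ _

theorem Mfun_le_Lfun : Mfun n s E F ≤ Lfun n s E F := by
  rw [Lfun_eq_add, Mfun_eq]
  exact le_add_self

theorem Lfun_tsub_Mfun_le {s₀ : ℝ} (hs : s ≤ s₀) :
    Lfun n s E F - Mfun n s E F ≤ Lfun n s₀ E F := by
  rw [tsub_le_iff_right, Lfun_eq_add, Mfun_eq, Lfun_eq_add]
  gcongr ?_ + _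
  refine le_add_right (setLIntegral_mono' measurableSet_Ioc fun t ht => ?_)
  exact mul_le_mul_left
    (ENNReal.ofReal_le_ofReal (Real.rpow_le_rpow_of_exponent_ge ht.1 ht.2 (by linarith))) _

end HeatKernel

theorem statement10_general (n : ℕ) (E F : Set (EuclideanSpace ℝ (Fin n)))
    (s₀ : ℝ) (hs₀ : s₀ ∈ Set.Ioo (0:ℝ) (1/2)) (hfin : Lfun n s₀ E F < ⊤) :
    Tendsto (fun s : ℝ => ENNReal.ofReal s *
        ((Lfun n s E F - Mfun n s E F) + (Mfun n s E F - Lfun n s E F)))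
      (𝓝[>] (0:ℝ)) (𝓝 0) := by
  have hbound : ∀ s ∈ Ioc 0 s₀, ENNReal.ofReal s *
      ((Lfun n s E F - Mfun n s E F) + (Mfun n s E F - Lfun n s E F)) ≤
        ENNReal.ofReal s * Lfun n s₀ E F := fun s hs => by
    rw [tsub_eq_zero_of_le (Mfun_le_Lfun n s E F), add_zero]
    exact mul_le_mul_right (Lfun_tsub_Mfun_le n s E F hs.2) _
  have hlim : Tendsto (fun s : ℝ => ENNReal.ofReal s * Lfun n s₀ E F) (𝓝[>] 0) (𝓝 0) := by
    have hofReal : Tendsto ENNReal.ofReal (𝓝[>] 0) (𝓝 0) := by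
      simpa using (ENNReal.continuous_ofReal.tendsto 0).mono_left nhdsWithin_le_nhds
    simpa using ENNReal.Tendsto.mul_const hofReal (Or.inr hfin.ne)
  exact tendsto_of_tendsto_of_tendsto_of_le_of_le' tendsto_const_nhds hlim
    (Eventually.of_forall fun _ => zero_le) (eventually_of_mem (Ioc_mem_nhdsGT hs₀.1) hbound)

/-- if `E, F` are disjoint measurable sets with `L_{s₀}(E,F) < ∞` for some
`s₀ ∈ (0,1/2)` and `min{𝓛ⁿ(E), 𝓛ⁿ(F)} < ∞`, then
`lim_{s→0⁺} s |L_s(E,F) − ∫_E ∫_F ∫₁^∞ p_t(x,y) t^{-(1+s)} dt dy dx| = 0`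
(the absolute difference is encoded via truncated subtraction in `ℝ≥0∞`). -/
theorem statement10 (n : ℕ) (hn : 1 ≤ n) (E F : Set (EuclideanSpace ℝ (Fin n)))
    (hE : MeasurableSet E) (hF : MeasurableSet F) (hEF : Disjoint E F)
    (s₀ : ℝ) (hs₀ : s₀ ∈ Set.Ioo (0:ℝ) (1/2)) (hfin : Lfun n s₀ E F < ⊤)
    (hmin : volume E < ⊤ ∨ volume F < ⊤) :
    Tendsto (fun s : ℝ => ENNReal.ofReal s *
        ((Lfun n s E F - Mfun n s E F) + (Mfun n s E F - Lfun n s E F)))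
      (𝓝[>] (0:ℝ)) (𝓝 0) :=
  statement10_general n E F s₀ hs₀ hfin
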